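/- arXiv:2506.06461 — 6 statements merged into one kernel-verified Lean document; each statement's English description precedes it below -/
import Mathlib

section
/- If T is a strong starter of order p, then in the triplication table Σ_p every weak set has cardinality at most 3; i.e., no value s ∈ Z_p occurs as the pair sum u + v mod p of more than three pairs (u, v) of Σ_p. -/
/-- `a`, `b` list the first/second elements of the pairs of a pairing in `ZMod n`.
`IsStarter n a b` says: the pairs partition `ZMod n \ {0}` (all entries distinct,
and the entries cover exactly the nonzero elements), and the differences
`±(a i - b i)` are all distinct and cover `ZMod n \ {0}`. -/
def IsStarter (n : ℕ) {ι : Type} (a b : ι → ZMod n) : Prop :=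
  Function.Injective (fun z : ι × Bool => if z.2 then a z.1 else b z.1) ∧
  Set.range a ∪ Set.range b = {x : ZMod n | x ≠ 0} ∧
  Function.Injective (fun z : ι × Bool => if z.2 then a z.1 - b z.1 else b z.1 - a z.1) ∧
  {d : ZMod n | ∃ i, d = a i - b i ∨ d = b i - a i} = {x : ZMod n | x ≠ 0}

/-- A strong starter: a starter whose pair sums `a i + b i` are all distinct and nonzero. -/
def IsStrongStarter (n : ℕ) {ι : Type} (a b : ι → ZMod n) : Prop :=
  IsStarter n a b ∧
  Function.Injective (fun i => a i + b i) ∧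
  ∀ i, a i + b i ≠ 0

/-- The triplication table `Σ_p` (as a flat list of ordered pairs): the top pair `(t,t)`
followed, for each `i`, by the row `(x i, y i), (t + x i, t + y i), (t - y i, t - x i)`. -/
def tripPairs {p q : ℕ} (x y : Fin q → ZMod p) (t : ZMod p) : List (ZMod p × ZMod p) :=
  (t, t) :: (List.finRange q).flatMap
    (fun i => [(x i, y i), (t + x i, t + y i), (t - y i, t - x i)])

lemma filter_flatMap_len {α : Type} {q : ℕ} (g : Fin q → List α) (f : α → Bool) :
    (((List.finRange q).flatMap g).filter f).length = ∑ i : Fin q, ((g i).filter f).length := by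
  rw [List.filter_flatMap, List.length_flatMap, Fin.sum_univ_def]

lemma row_len {p : ℕ} (a b c d e f s : ZMod p) :
    (([(a, b), (c, d), (e, f)] : List (ZMod p × ZMod p)).filter
        (fun uv => uv.1 + uv.2 = s)).length
      = ((if a + b = s then 1 else 0) + (if c + d = s then 1 else 0))
        + (if e + f = s then 1 else 0) := by
  by_cases h1 : a + b = s <;> by_cases h2 : c + d = s <;> by_cases h3 : e + f = s <;>
    simp [List.filter, h1, h2, h3]

lemma sum_ite_le_one {p q : ℕ} {f : Fin q → ZMod p} (hf : Function.Injective f)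
    (s : ZMod p) : (∑ i : Fin q, if f i = s then 1 else 0) ≤ 1 := by
  classical
  have h : (∑ i : Fin q, if f i = s then 1 else 0)
      = (Finset.univ.filter (fun i => f i = s)).card := by
    rw [Finset.card_filter]
  rw [h]
  apply Finset.card_le_one.mpr
  intro a ha b hb
  simp only [Finset.mem_filter] at ha hb
  exact hf (ha.2.trans hb.2.symm)

/-- Weak sets are small: if `T` is a strong starter of order `p` then no value
`s ∈ Z_p` is the pair sum of more than three pairs of the triplication table. -/
theorem trip_weak_sets_card_le_three (p q : ℕ) (hp : p = 2 * q + 1) (hodd : Odd p)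
    (h3 : Nat.Coprime p 3) (x y : Fin q → ZMod p) (hT : IsStrongStarter p x y)
    (t : ZMod p) (s : ZMod p) :
    ((tripPairs x y t).filter (fun uv => uv.1 + uv.2 = s)).length ≤ 3 := by
  classical
  obtain ⟨hstart, hinj, hne⟩ := hT
  have hflat : (((List.finRange q).flatMap
        (fun i => [(x i, y i), (t + x i, t + y i), (t - y i, t - x i)])).filter
        (fun uv => decide (uv.1 + uv.2 = s))).length
      = ∑ i : Fin q, (((if x i + y i = s then 1 else 0)
          + (if t + x i + (t + y i) = s then 1 else 0))
          + (if t - y i + (t - x i) = s then 1 else 0)) := by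
    rw [filter_flatMap_len]
    exact Finset.sum_congr rfl (fun i _ => row_len _ _ _ _ _ _ s)
  have hA : (∑ i : Fin q, if x i + y i = s then 1 else 0) ≤ 1 := sum_ite_le_one hinj s
  have hBinj : Function.Injective (fun i => t + x i + (t + y i)) := by
    intro a b hab
    simp only at hab
    exact hinj (by linear_combination hab)
  have hCinj : Function.Injective (fun i => t - y i + (t - x i)) := by
    intro a b hab
    simp only at hab
    exact hinj (by linear_combination -hab)
  have hB : (∑ i : Fin q, if t + x i + (t + y i) = s then 1 else 0) ≤ 1 := sum_ite_le_one hBinj s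
  have hC : (∑ i : Fin q, if t - y i + (t - x i) = s then 1 else 0) ≤ 1 := sum_ite_le_one hCinj s
  have hsplit : (∑ i : Fin q, (((if x i + y i = s then 1 else 0)
          + (if t + x i + (t + y i) = s then 1 else 0))
          + (if t - y i + (t - x i) = s then 1 else 0)))
      = (∑ i : Fin q, if x i + y i = s then 1 else 0)
        + (∑ i : Fin q, if t + x i + (t + y i) = s then 1 else 0)
        + (∑ i : Fin q, if t - y i + (t - x i) = s then 1 else 0) := by
    rw [Finset.sum_add_distrib, Finset.sum_add_distrib]
  by_cases hts : t + t = s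
  · have hB0 : ∀ i : Fin q, ¬ (t + x i + (t + y i) = s) := fun i h =>
      hne i (by linear_combination h - hts)
    have hC0 : ∀ i : Fin q, ¬ (t - y i + (t - x i) = s) := fun i h =>
      hne i (by linear_combination hts - h)
    have hBz : (∑ i : Fin q, if t + x i + (t + y i) = s then 1 else 0) = 0 :=
      Finset.sum_eq_zero (fun i _ => if_neg (hB0 i))
    have hCz : (∑ i : Fin q, if t - y i + (t - x i) = s then 1 else 0) = 0 :=
      Finset.sum_eq_zero (fun i _ => if_neg (hC0 i))
    rw [tripPairs, List.filter_cons]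
    have hd : (decide ((t, t).1 + (t, t).2 = s)) = true := by simpa using hts
    rw [hd]
    simp only [if_pos]
    rw [List.length_cons, hflat, hsplit, hBz, hCz]
    omega
  · rw [tripPairs, List.filter_cons]
    have : (decide ((t, t).1 + (t, t).2 = s)) = false := by
      simpa using hts
    rw [this]
    simp only [Bool.false_eq_true, if_false]
    rw [hflat, hsplit]
    omega
end

section
/- If T is a strong starter of order p, then the triplication table Σ_p contains at most two pairs with sum 0 mod p. -/
open Finset

theorem Function.Injective.card_filter_apply_eq_le_one {ι α : Type*} {f : ι → α}
    (hf : Function.Injective f) (s : Finset ι) (c : α) [DecidablePred (f · = c)] :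
    #{i ∈ s | f i = c} ≤ 1 :=
  card_le_one.2 fun _ hi _ hj ↦ hf <| (mem_filter.1 hi).2.trans (mem_filter.1 hj).2.symm

lemma countP_zero_sum_row {R : Type*} [AddCommGroup R] [DecidableEq R] (a b t : R) :
    [(a, b), (t + a, t + b), (t - b, t - a)].countP (fun uv => uv.1 + uv.2 = 0) =
      (if a + b = 0 then 1 else 0) + (if a + b = -(t + t) then 1 else 0) +
        (if a + b = t + t then 1 else 0) := by
  have h₁ : t + a + (t + b) = a + b - -(t + t) := by abel
  have h₂ : t - b + (t - a) = -(a + b - (t + t)) := by abel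
  simp only [List.countP_cons, List.countP_nil, decide_eq_true_eq, h₁, h₂, neg_eq_zero,
    sub_eq_zero]
  omega

lemma countP_zero_sum_tripPairs {p q : ℕ} (x y : Fin q → ZMod p) (t : ZMod p) :
    (tripPairs x y t).countP (fun uv => uv.1 + uv.2 = 0) =
      #{i | x i + y i = 0} + #{i | x i + y i = -(t + t)} + #{i | x i + y i = t + t} +
        (if t + t = 0 then 1 else 0) := by
  rw [tripPairs, List.countP_cons, List.countP_flatMap]
  simp only [Function.comp_def, countP_zero_sum_row, decide_eq_true_eq]
  rw [← Fin.sum_univ_def]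
  simp only [sum_add_distrib, sum_boole, Nat.cast_id]

theorem trip_at_most_two_zero_sums_general (p q : ℕ)
    (x y : Fin q → ZMod p) (hT : IsStrongStarter p x y) (t : ZMod p) :
    ((tripPairs x y t).filter (fun uv => uv.1 + uv.2 = 0)).length ≤ 2 := by
  obtain ⟨-, hinj, hne⟩ := hT
  have hfiber (c : ZMod p) : #{i | x i + y i = c} ≤ 1 := hinj.card_filter_apply_eq_le_one _ c
  have hzero : #{i | x i + y i = 0} = 0 := card_eq_zero.2 (filter_false_of_mem fun i _ ↦ hne i)
  rw [← List.countP_eq_length_filter, countP_zero_sum_tripPairs, hzero]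
  by_cases h2t : t + t = 0
  · simp [h2t, hzero]
  · rw [if_neg h2t]
    linarith [hfiber (-(t + t)), hfiber (t + t)]

/-- If `T` is a strong starter of order `p`, then the triplication table contains
at most two pairs with sum `0` mod `p`. -/
theorem trip_at_most_two_zero_sums (p q : ℕ) (hp : p = 2 * q + 1) (hodd : Odd p)
    (x y : Fin q → ZMod p) (hT : IsStrongStarter p x y) (t : ZMod p) :
    ((tripPairs x y t).filter (fun uv => uv.1 + uv.2 = 0)).length ≤ 2 :=
  trip_at_most_two_zero_sums_general p q x y hT t
end

section
/- In the triplication table Σ_p built from a starter T of order p, for every c ∈ Z_p with c ≠ 0, the value c occurs exactly 3 times among all entries of Σ_p, and the value 0 occurs exactly 2 times. -/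
/-!
The entries of `Σ_p` are `t` twice, the entries of `T`, the entries of `T` translated by `t`,
and the entries of `T` reflected about `t`. The entries of `T` are the nonzero residues, each
exactly once, so `c` occurs `2 [t = c] + [c ≠ 0] + [c ≠ t] + [t ≠ c]` times.
-/

def pairEntries {α : Type*} {q : ℕ} (x y : Fin q → α) : List α :=
  (List.finRange q).flatMap fun i => [x i, y i]

theorem pairEntries_eq_map_product {α : Type*} {q : ℕ} (x y : Fin q → α) :
    pairEntries x y =
      ((List.finRange q).product [true, false]).map fun z => if z.2 then x z.1 else y z.1 := by
  simp [pairEntries, List.product, List.map_flatMap]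

theorem mem_pairEntries {α : Type*} {q : ℕ} {x y : Fin q → α} {c : α} :
    c ∈ pairEntries x y ↔ c ∈ Set.range x ∪ Set.range y := by
  simp only [pairEntries, List.mem_flatMap, List.mem_finRange, true_and, List.mem_cons,
    List.not_mem_nil, or_false, Set.mem_union, Set.mem_range, eq_comm (b := c)]
  exact exists_or

theorem nodup_pairEntries_of_injective {α : Type*} {q : ℕ} {x y : Fin q → α}
    (h : Function.Injective fun z : Fin q × Bool => if z.2 then x z.1 else y z.1) :
    (pairEntries x y).Nodup := by
  rw [pairEntries_eq_map_product]
  exact ((List.nodup_finRange q).product (by simp)).map h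

theorem IsStarter.count_pairEntries {p q : ℕ} {x y : Fin q → ZMod p} (hT : IsStarter p x y)
    (c : ZMod p) : (pairEntries x y).count c = if c = 0 then 0 else 1 := by
  have hmem : c ∈ pairEntries x y ↔ c ≠ 0 := by rw [mem_pairEntries, hT.2.1]; rfl
  split_ifs with hc
  · exact List.count_eq_zero.2 (by simpa [hc] using hmem.not)
  · exact List.count_eq_one_of_mem (nodup_pairEntries_of_injective hT.1) (hmem.2 hc)

theorem count_entries_tripPairs {p q : ℕ} (x y : Fin q → ZMod p) (t c : ZMod p) :
    ((tripPairs x y t).flatMap fun uv => [uv.1, uv.2]).count c =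
      (if t = c then 2 else 0) + (pairEntries x y).count c +
        (pairEntries x y).count (c - t) + (pairEntries x y).count (t - c) := by
  have hrow : ∀ u v : ZMod p, [u, v, t + u, t + v, t - v, t - u].count c =
      [u, v].count c + [u, v].count (c - t) + [u, v].count (t - c) := by
    intro u v
    have hadd : ∀ w, t + w = c ↔ w = c - t := fun w => by
      rw [eq_sub_iff_add_eq, add_comm]
    have hsub : ∀ w, t - w = c ↔ w = t - c := fun w => by
      rw [sub_eq_iff_eq_add, eq_sub_iff_add_eq', eq_comm]
    simp only [List.count_cons, List.count_nil, beq_iff_eq, hadd, hsub]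
    split_ifs <;> omega
  simp only [tripPairs, pairEntries, List.flatMap_cons, List.flatMap_assoc, List.count_cons,
    List.count_flatMap, List.flatMap_nil, List.append_nil, List.cons_append, List.nil_append,
    Function.comp_def, hrow, List.sum_map_add, beq_iff_eq]
  split_ifs <;> omega

theorem trip_monochrome_counts_general (p q : ℕ)
    (x y : Fin q → ZMod p) (hT : IsStarter p x y) (t : ZMod p) :
    (∀ c : ZMod p, c ≠ 0 →
      (((tripPairs x y t).flatMap (fun uv => [uv.1, uv.2])).count c = 3)) ∧
    ((tripPairs x y t).flatMap (fun uv => [uv.1, uv.2])).count 0 = 2 := by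
  simp only [count_entries_tripPairs, hT.count_pairEntries, sub_eq_zero]
  refine ⟨fun c hc => ?_, ?_⟩
  · by_cases htc : t = c
    · simp [htc, hc]
    · simp [htc, hc, Ne.symm htc]
  · by_cases ht : t = 0 <;> simp [ht, eq_comm]

/-- Monochrome sets: in the triplication table built from a starter `T`, every nonzero
value `c` occurs exactly 3 times among the entries, and `0` occurs exactly 2 times. -/
theorem trip_monochrome_counts (p q : ℕ) (hp : p = 2 * q + 1) (hodd : Odd p)
    (x y : Fin q → ZMod p) (hT : IsStarter p x y) (t : ZMod p) :
    (∀ c : ZMod p, c ≠ 0 →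
      (((tripPairs x y t).flatMap (fun uv => [uv.1, uv.2])).count c = 3)) ∧
    ((tripPairs x y t).flatMap (fun uv => [uv.1, uv.2])).count 0 = 2 :=
  trip_monochrome_counts_general p q x y hT t
end

section
/- Triplication main theorem: let T be a strong starter of order p (p odd, coprime with 3), t ∈ Z_p, and Σ_p = [(u_i, v_i)]_{i=0}^{3q} its extension. Suppose values (U_i, V_i) in Z_3 satisfy: (1) for each regular row i, the three differences U_j - V_j mod 3 (j = 3i-2, 3i-1, 3i) are pairwise distinct; (2) for each weak set of Σ_p, the sums U_j + V_j mod 3 over its indices are pairwise distinct, and additionally nonzero for the weak set with pair sum 0 mod p; (3) for each c ∈ Z_p, the values at positions where Σ_p has entry c are pairwise distinct mod 3, and nonzero at the positions of entry 0. Define a_i, b_i ∈ Z_{3p} by CRT: a_i ≡ u_i mod p, a_i ≡ U_i mod 3, b_i ≡ v_i mod p, b_i ≡ V_i mod 3. Then {{a_i, b_i}}_{i=0}^{3q} is a strong starter in Z_{3p}. -/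
/-- The constraints of the modular Sudoku problem associated with the triplication table
`Σ_p = tripPairs x y t`, on unknowns `(U j, V j) ∈ Z_3`:
row constraints (positions with equal differences mod `p` get distinct differences mod 3),
weak-set constraints (positions with equal pair sums mod `p` get distinct sums mod 3,
nonzero when the pair sum is `0` mod `p`), and color constraints (positions carrying the
same entry of `Z_p` get distinct values mod 3, nonzero at entries `0`). -/
def SudokuConstraints {p q : ℕ} (x y : Fin q → ZMod p) (t : ZMod p)
    (U V : Fin (tripPairs x y t).length → ZMod 3) : Prop :=
  (∀ j j' : Fin (tripPairs x y t).length, j ≠ j' →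
      ((tripPairs x y t).get j).1 - ((tripPairs x y t).get j).2
        = ((tripPairs x y t).get j').1 - ((tripPairs x y t).get j').2 →
      U j - V j ≠ U j' - V j') ∧
  (∀ j j' : Fin (tripPairs x y t).length, j ≠ j' →
      ((tripPairs x y t).get j).1 + ((tripPairs x y t).get j).2
        = ((tripPairs x y t).get j').1 + ((tripPairs x y t).get j').2 →
      U j + V j ≠ U j' + V j') ∧
  (∀ j : Fin (tripPairs x y t).length,
      ((tripPairs x y t).get j).1 + ((tripPairs x y t).get j).2 = 0 → U j + V j ≠ 0) ∧
  (∀ (j j' : Fin (tripPairs x y t).length) (l l' : Bool), (j, l) ≠ (j', l') →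
      (if l then ((tripPairs x y t).get j).1 else ((tripPairs x y t).get j).2)
        = (if l' then ((tripPairs x y t).get j').1 else ((tripPairs x y t).get j').2) →
      (if l then U j else V j) ≠ (if l' then U j' else V j')) ∧
  (∀ (j : Fin (tripPairs x y t).length) (l : Bool),
      (if l then ((tripPairs x y t).get j).1 else ((tripPairs x y t).get j).2) = 0 →
      (if l then U j else V j) ≠ 0)

private lemma inj_range_eq' {n N : ℕ} [NeZero n] (hcard : 2 * N + 1 = n)
    (f : Fin N × Bool → ZMod n) (hinj : Function.Injective f) (hnz : ∀ z, f z ≠ 0) :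
    Set.range f = {x : ZMod n | x ≠ 0} := by
  classical
  have h1 : (Finset.univ.image f) ⊆ Finset.univ \ {0} := by
    intro w hw
    simp only [Finset.mem_image] at hw
    obtain ⟨z, _, rfl⟩ := hw
    simp [hnz z]
  have h2 : (Finset.univ \ {0} : Finset (ZMod n)).card = n - 1 := by
    rw [Finset.card_sdiff_of_subset (by simp)]
    simp [ZMod.card]
  have h3 : (Finset.univ.image f).card = 2 * N := by
    rw [Finset.card_image_of_injective _ hinj]
    simp [Fintype.card_prod, mul_comm]
  have he : Finset.univ.image f = Finset.univ \ {0} :=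
    Finset.eq_of_subset_of_card_le h1 (by omega)
  have := congrArg (fun s : Finset (ZMod n) => (s : Set (ZMod n))) he
  simpa [Set.ext_iff, eq_comm] using this

private lemma trip_diffstruct' {p q : ℕ} (x y : Fin q → ZMod p) (t : ZMod p)
    (j : Fin (tripPairs x y t).length) :
    (j.val = 0 ∧ ((tripPairs x y t).get j).1 - ((tripPairs x y t).get j).2 = 0)
    ∨ ∃ r, ((tripPairs x y t).get j).1 - ((tripPairs x y t).get j).2 = x r - y r := by
  obtain ⟨jv, hjlt⟩ := j
  cases jv with
  | zero => exact Or.inl ⟨rfl, by simp [tripPairs]⟩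
  | succ n =>
    right
    have hm : (tripPairs x y t).get ⟨n+1, hjlt⟩ ∈
        (List.finRange q).flatMap
          (fun i => [(x i, y i), (t + x i, t + y i), (t - y i, t - x i)]) := by
      rw [show (tripPairs x y t).get ⟨n+1, hjlt⟩
          = ((List.finRange q).flatMap
            (fun i => [(x i, y i), (t + x i, t + y i), (t - y i, t - x i)])).get ⟨n, by
              simpa [tripPairs] using hjlt⟩ from List.get_cons_succ]
      exact List.get_mem _ _
    rw [List.mem_flatMap] at hm
    obtain ⟨r, _, hr⟩ := hm
    simp only [List.mem_cons, List.mem_singleton, List.not_mem_nil, or_false] at hr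
    rcases hr with h | h | h <;> exact ⟨r, by rw [h]; try ring⟩

set_option maxHeartbeats 1000000 in
/-- Triplication main theorem: a solution of the modular Sudoku problem associated with a
strong starter `T` of order `p` and key `t`, merged with the extension `Σ_p` by CRT,
yields a strong starter in `Z_{3p}`. -/
theorem triplication_main (p q : ℕ) (hp : p = 2 * q + 1) (hodd : Odd p)
    (h3 : Nat.Coprime p 3) (x y : Fin q → ZMod p) (hT : IsStrongStarter p x y)
    (t : ZMod p) (U V : Fin (tripPairs x y t).length → ZMod 3)
    (hUV : SudokuConstraints x y t U V)
    (a b : Fin (tripPairs x y t).length → ZMod (3 * p))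
    (ha : ∀ j, ZMod.castHom (dvd_mul_left p 3) (ZMod p) (a j) = ((tripPairs x y t).get j).1
        ∧ ZMod.castHom (dvd_mul_right 3 p) (ZMod 3) (a j) = U j)
    (hb : ∀ j, ZMod.castHom (dvd_mul_left p 3) (ZMod p) (b j) = ((tripPairs x y t).get j).2
        ∧ ZMod.castHom (dvd_mul_right 3 p) (ZMod 3) (b j) = V j) :
    IsStrongStarter (3 * p) a b := by
  classical
  haveI : NeZero (3 * p) := ⟨by omega⟩
  obtain ⟨⟨hTinj, hTrange, hTdinj, hTdrange⟩, hTsum, hTsum0⟩ := hT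
  obtain ⟨c1, c2, c3, c4, c5⟩ := hUV
  set πp := ZMod.castHom (dvd_mul_left p 3) (ZMod p) with hπp
  set π3 := ZMod.castHom (dvd_mul_right 3 p) (ZMod 3) with hπ3
  have hlen : (tripPairs x y t).length = 3 * q + 1 := by
    simp [tripPairs, Function.comp_def, List.map_const', List.sum_replicate, mul_comm]
  have hxy : ∀ r, x r - y r ≠ 0 := by
    intro r h
    have hm : (x r - y r) ∈ {d : ZMod p | ∃ i, d = x i - y i ∨ d = y i - x i} :=
      ⟨r, Or.inl rfl⟩
    rw [hTdrange] at hm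
    exact hm h
  have hopp : ∀ r s, x r - y r ≠ y s - x s := by
    intro r s h
    have := hTdinj (a₁ := (r, true)) (a₂ := (s, false)) (by simpa using h)
    simp at this
  -- entries distinct
  have einj : Function.Injective
      (fun z : Fin (tripPairs x y t).length × Bool => if z.2 then a z.1 else b z.1) := by
    rintro ⟨i, li⟩ ⟨j, lj⟩ h
    by_contra hne
    simp only at h
    have hP := congrArg πp h
    have hQ := congrArg π3 h
    simp only [apply_ite πp, apply_ite π3, (ha _).1, (hb _).1, (ha _).2, (hb _).2] at hP hQ
    exact c4 i j li lj (by simpa using hne) hP hQ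
  have hab : ∀ i, a i ≠ b i := by
    intro i h
    have := einj (a₁ := (i, true)) (a₂ := (i, false)) (by simpa using h)
    simp at this
  -- entries nonzero
  have enz : ∀ z : Fin (tripPairs x y t).length × Bool,
      (if z.2 then a z.1 else b z.1) ≠ 0 := by
    rintro ⟨j, l⟩ h0
    simp only at h0
    have hP := congrArg πp h0
    have hQ := congrArg π3 h0
    simp only [apply_ite πp, apply_ite π3, (ha _).1, (hb _).1, (ha _).2, (hb _).2,
      map_zero] at hP hQ
    exact c5 j l hP hQ
  -- range of entries
  have hrange : Set.range a ∪ Set.range b = {x : ZMod (3 * p) | x ≠ 0} := by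
    have hre : Set.range a ∪ Set.range b
        = Set.range (fun z : Fin (tripPairs x y t).length × Bool =>
            if z.2 then a z.1 else b z.1) := by
      ext w
      constructor
      · rintro (⟨i, rfl⟩ | ⟨i, rfl⟩)
        · exact ⟨(i, true), rfl⟩
        · exact ⟨(i, false), rfl⟩
      · rintro ⟨⟨i, l⟩, rfl⟩
        cases l
        · exact Or.inr ⟨i, rfl⟩
        · exact Or.inl ⟨i, rfl⟩
    rw [hre]
    exact inj_range_eq' (by omega) _ einj enz
  -- mixed-sign difference coincidence mod p is impossible for distinct indices
  have mixed : ∀ i j : Fin (tripPairs x y t).length, i ≠ j →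
      ((tripPairs x y t).get i).1 - ((tripPairs x y t).get i).2
        = ((tripPairs x y t).get j).2 - ((tripPairs x y t).get j).1 → False := by
    intro i j hij h
    rcases trip_diffstruct' x y t i with ⟨hi0, hiD⟩ | ⟨r, hiD⟩ <;>
      rcases trip_diffstruct' x y t j with ⟨hj0, hjD⟩ | ⟨s, hjD⟩
    · exact hij (Fin.val_injective (hi0.trans hj0.symm))
    · exact hxy s (by linear_combination h - hiD - hjD)
    · exact hxy r (by linear_combination h - hiD - hjD)
    · exact hopp r s (by linear_combination h - hiD - hjD)
  have dself : ∀ i : Fin (tripPairs x y t).length, a i - b i ≠ b i - a i := by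
    intro i h
    have hneg : -(a i - b i) = a i - b i := by linear_combination -h
    rcases (ZMod.neg_eq_self_iff _).mp hneg with h0 | hval
    · exact hab i (by linear_combination h0)
    · have hoddn : Odd (3 * p) := (by decide : Odd 3).mul hodd
      obtain ⟨k, hk⟩ := hoddn
      omega
  have key : ∀ i j : Fin (tripPairs x y t).length, i ≠ j → a i - b i = a j - b j → False := by
    intro i j hij hd
    have hP := congrArg πp hd
    have hQ := congrArg π3 hd
    simp only [map_sub, (ha _).1, (hb _).1, (ha _).2, (hb _).2] at hP hQ
    exact c1 i j hij hP hQ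
  have keym : ∀ i j : Fin (tripPairs x y t).length, a i - b i = b j - a j → False := by
    intro i j hd
    by_cases hij : i = j
    · subst hij; exact dself i hd
    · have hP := congrArg πp hd
      simp only [map_sub, (ha _).1, (hb _).1] at hP
      exact mixed i j hij hP
  have dinj : Function.Injective
      (fun z : Fin (tripPairs x y t).length × Bool =>
        if z.2 then a z.1 - b z.1 else b z.1 - a z.1) := by
    rintro ⟨i, li⟩ ⟨j, lj⟩ h
    by_contra hne
    simp only at h
    cases li <;> cases lj <;>
      simp only [if_true, if_false, Bool.false_eq_true, reduceIte] at h
    · refine key i j ?_ (by linear_combination -h)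
      rintro rfl; exact hne rfl
    · exact keym j i h.symm
    · exact keym i j h
    · refine key i j ?_ h
      rintro rfl; exact hne rfl
  have dnz : ∀ z : Fin (tripPairs x y t).length × Bool,
      (if z.2 then a z.1 - b z.1 else b z.1 - a z.1) ≠ 0 := by
    rintro ⟨i, l⟩ h0
    cases l <;> simp only [if_true, if_false, Bool.false_eq_true, reduceIte] at h0
    · exact dself i (by linear_combination -2 * h0)
    · exact dself i (by linear_combination 2 * h0)
  have hdrange : {d : ZMod (3 * p) | ∃ i, d = a i - b i ∨ d = b i - a i}
      = {x : ZMod (3 * p) | x ≠ 0} := by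
    have hre : {d : ZMod (3 * p) | ∃ i, d = a i - b i ∨ d = b i - a i}
        = Set.range (fun z : Fin (tripPairs x y t).length × Bool =>
            if z.2 then a z.1 - b z.1 else b z.1 - a z.1) := by
      ext w
      constructor
      · rintro ⟨i, rfl | rfl⟩
        · exact ⟨(i, true), rfl⟩
        · exact ⟨(i, false), rfl⟩
      · rintro ⟨⟨i, l⟩, rfl⟩
        cases l
        · exact ⟨i, Or.inr rfl⟩
        · exact ⟨i, Or.inl rfl⟩
    rw [hre]
    exact inj_range_eq' (by omega) _ dinj dnz
  refine ⟨⟨einj, hrange, dinj, hdrange⟩, ?_, ?_⟩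
  · intro i j h
    by_contra hne
    simp only at h
    have hP := congrArg πp h
    have hQ := congrArg π3 h
    simp only [map_add, (ha _).1, (hb _).1, (ha _).2, (hb _).2] at hP hQ
    exact c2 i j hne hP hQ
  · intro i h
    have hP := congrArg πp h
    have hQ := congrArg π3 h
    simp only [map_add, map_zero, (ha _).1, (hb _).1, (ha _).2, (hb _).2] at hP hQ
    exact c3 i hP hQ
end

section
/- Necessary condition for Sudoku solvability: if the key t equals 0, or t equals one of the pair sums x_i + y_i mod p of the base starter T, then the modular Sudoku problem associated with (T, t) has no solution. Equivalently, in these cases the triplication table contains two identical pairs in the same regular row, and no assignment of values mod 3 can satisfy the row, weak-set, and color constraints simultaneously for such a row. -/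
/-- Necessary condition for Sudoku solvability: if the key `t` is `0` or is one of the
pair sums of the base starter `T`, the modular Sudoku problem has no solution. -/
theorem sudoku_no_solution_for_bad_key (p q : ℕ) (hp : p = 2 * q + 1) (hodd : Odd p)
    (x y : Fin q → ZMod p) (hT : IsStarter p x y) (t : ZMod p)
    (ht : t = 0 ∨ ∃ i, x i + y i = t) :
    ¬ ∃ U V : Fin (tripPairs x y t).length → ZMod 3, SudokuConstraints x y t U V := by
  rintro ⟨U, V, hrow, hweak, hweak0, hcol, hcol0⟩
  rcases ht with ht | ⟨i, hi⟩
  · -- t = 0: use the top pair (t,t) = (0,0)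
    subst ht
    have hlen : 0 < (tripPairs x y 0).length := by simp [tripPairs]
    set j : Fin (tripPairs x y 0).length := ⟨0, hlen⟩ with hj
    have h1 : U j ≠ 0 := by
      have := hcol0 j true
      simpa [tripPairs, hj] using this
    have h2 : V j ≠ 0 := by
      have := hcol0 j false
      simpa [tripPairs, hj] using this
    have h3 : U j ≠ V j := by
      have := hcol j j true false (by simp) (by simp [tripPairs, hj])
      simpa using this
    have h4 : U j + V j ≠ 0 := hweak0 j (by simp [tripPairs, hj])
    revert h1 h2 h3 h4
    generalize U j = u; generalize V j = v
    revert u v; decide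
  · -- t = x i + y i: row i contains the pair (x i, y i) twice
    have hdup : List.Duplicate (x i, y i) (tripPairs x y t) := by
      rw [List.duplicate_iff_sublist]
      have hb : List.Sublist [(x i, y i), (x i, y i)]
          [(x i, y i), (t + x i, t + y i), (t - y i, t - x i)] := by
        have e1 : t - y i = x i := by rw [← hi]; ring
        have e2 : t - x i = y i := by rw [← hi]; ring
        rw [e1, e2]
        exact (List.sublist_cons_self _ _).cons₂ _
      refine hb.trans ?_
      refine List.Sublist.trans ?_ (List.sublist_cons_self _ _)
      have hmem : [(x i, y i), (t + x i, t + y i), (t - y i, t - x i)] ∈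
          (List.finRange q).map
            (fun i => [(x i, y i), (t + x i, t + y i), (t - y i, t - x i)]) := by
        exact List.mem_map_of_mem (List.mem_finRange i)
      simpa [List.flatMap] using List.sublist_flatten_of_mem hmem
    have hnd : ¬ (tripPairs x y t).Nodup :=
      List.exists_duplicate_iff_not_nodup.1 ⟨_, hdup⟩
    rw [List.nodup_iff_injective_get] at hnd
    rw [Function.Injective] at hnd
    push_neg at hnd
    obtain ⟨j, j', hgg, hne⟩ := hnd
    have hgg' : (tripPairs x y t)[(j : ℕ)] = (tripPairs x y t)[(j' : ℕ)] := hgg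
    have h1 : U j ≠ U j' := by
      have := hcol j j' true true (by simp [hne]) (by simp [hgg'])
      simpa using this
    have h2 : V j ≠ V j' := by
      have := hcol j j' false false (by simp [hne]) (by simp [hgg'])
      simpa using this
    have h3 : U j - V j ≠ U j' - V j' := hrow j j' hne (by rw [hgg])
    have h4 : U j + V j ≠ U j' + V j' := hweak j j' hne (by rw [hgg])
    revert h1 h2 h3 h4
    generalize U j = u; generalize V j = v; generalize U j' = u'; generalize V j' = v'
    revert u v u' v'; decide
end

section
/- If T is a strong starter of order p and t ∈ Z_p, then no two distinct pairs lying in the same column of the triplication table Σ_p (first column: the pairs (x_i,y_i); second column: (t+x_i,t+y_i) together with the top pair (t,t); third column: (t-y_i,t-x_i)) have equal pair sums mod p. -/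
/-! The sums in the second and third columns are the images of the starter's sums `x i + y i`
under the bijections `s ↦ s + 2t` and `s ↦ 2t - s`, and the top pair's sum `2t` is the image
of `0`; so everything follows from the starter's sums being distinct and nonzero. -/

section PairSums

variable {ι G : Type*} [AddCommGroup G] {a b : ι → G}

theorem Function.Injective.translate_pair_sum (h : Function.Injective fun i => a i + b i) (t : G) :
    Function.Injective fun i => (t + a i) + (t + b i) := by
  simp only [add_add_add_comm t _ t]
  exact (add_right_injective (t + t)).comp h

theorem Function.Injective.reflect_pair_sum (h : Function.Injective fun i => a i + b i) (t : G) :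
    Function.Injective fun i => (t - b i) + (t - a i) := by
  have hsum : (fun i => (t - b i) + (t - a i)) = ((t + t) - ·) ∘ fun i => a i + b i := by
    funext i
    simp only [Function.comp_apply]
    abel
  rw [hsum]
  exact sub_right_injective.comp h

theorem translate_pair_sum_ne_add_self (h : ∀ i, a i + b i ≠ 0) (t : G) (i : ι) :
    (t + a i) + (t + b i) ≠ t + t := by
  rw [add_add_add_comm]
  exact add_ne_left.mpr (h i)

end PairSums

theorem trip_column_sums_distinct_general (p q : ℕ)
    (x y : Fin q → ZMod p) (hT : IsStrongStarter p x y) (t : ZMod p) :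
    (∀ i j : Fin q, i ≠ j → x i + y i ≠ x j + y j) ∧
    (∀ i j : Fin q, i ≠ j → (t + x i) + (t + y i) ≠ (t + x j) + (t + y j)) ∧
    (∀ i : Fin q, (t + x i) + (t + y i) ≠ t + t) ∧
    (∀ i j : Fin q, i ≠ j → (t - y i) + (t - x i) ≠ (t - y j) + (t - x j)) := by
  obtain ⟨-, hinj, hnz⟩ := hT
  exact ⟨fun _ _ => hinj.ne, fun _ _ => (hinj.translate_pair_sum t).ne,
    translate_pair_sum_ne_add_self hnz t, fun _ _ => (hinj.reflect_pair_sum t).ne⟩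

/-- If `T` is a strong starter of order `p`, then no two distinct pairs in the same
column of the triplication table (first column: `(x i, y i)`; second column:
`(t + x i, t + y i)` together with the top pair `(t,t)`; third column:
`(t - y i, t - x i)`) have equal pair sums mod `p`. -/
theorem trip_column_sums_distinct (p q : ℕ) (hp : p = 2 * q + 1) (hodd : Odd p)
    (x y : Fin q → ZMod p) (hT : IsStrongStarter p x y) (t : ZMod p) :
    (∀ i j : Fin q, i ≠ j → x i + y i ≠ x j + y j) ∧
    (∀ i j : Fin q, i ≠ j → (t + x i) + (t + y i) ≠ (t + x j) + (t + y j)) ∧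
    (∀ i : Fin q, (t + x i) + (t + y i) ≠ t + t) ∧
    (∀ i j : Fin q, i ≠ j → (t - y i) + (t - x i) ≠ (t - y j) + (t - x j)) :=
  trip_column_sums_distinct_general p q x y hT t
end
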